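/- arXiv:0912.1140 — 6 statements merged into one kernel-verified Lean document; each statement's English description precedes it below -/
import Mathlib

section
/- Let T be the infinite rooted k-ary tree (k ≥ 2) with graph metric d. For any finite subsets E, F of T and any integer r ≥ 0, the number of pairs (x,y) ∈ E × F with d(x,y) = r is at most 2·|E|^{1/2}·|F|^{1/2}·k^{r/2}. -/
/-!
For `x, y` let `climb x y` and `climb y x` be the heights of `x` and `y` above their meeting
point, so that `d(x, y) = climb x y + climb y x`. Given `x`, a vertex `y` with prescribed heights
`(i, j)` is determined by its last `j` letters, and when `0 < i` and `0 < j` the first of these must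
avoid the letter by which `x` continues, leaving at most `(k - 1) k^(j - 1)` choices. Summing, at
most `k^m` vertices at distance `r` from `x` have `climb y x ≤ m` whenever `m < r`, and at most
`2 k^r` vertices lie at distance `r` in all.

Every pair at distance `r = m + n + 1` has `climb y x ≤ m` or `climb x y ≤ n`, so there are at most
`|E| k^m + |F| k^n` of them. If `|E|` and `|F|` are within a factor `k^r` of each other, `m` can be
chosen so that the two terms are within a factor `k` of each other, and then their sum is at most
`2 √(k |E| k^m |F| k^n) = 2 √(|E| |F| k^r)`. Otherwise, say, `k^r |E| ≤ |F|`, and then the crude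
bound `2 k^r |E|` on the number of pairs is already at most `2 √(|E| |F| k^r)`.
-/

/-- Length of the longest common prefix of two lists (read from the root of the tree). -/
def lcp {α : Type*} [DecidableEq α] : List α → List α → ℕ
  | a :: as, b :: bs => if a = b then lcp as bs + 1 else 0
  | _, _ => 0

/-- The graph distance in the infinite rooted `k`-ary tree, whose vertices are finite
words over `Fin k` (paths from the root). -/
def treeDist {α : Type*} [DecidableEq α] (x y : List α) : ℕ :=
  (x.length - lcp x y) + (y.length - lcp x y)

lemma Finset.card_filter_le_card_filter_add_card_filter {β : Type*} [DecidableEq β] {s : Finset β}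
    {p q q' : β → Prop} [DecidablePred p] [DecidablePred q] [DecidablePred q']
    (h : ∀ a, p a → q a ∨ q' a) :
    (s.filter p).card ≤ (s.filter q).card + (s.filter q').card :=
  (Finset.card_le_card (Finset.monotone_filter_right s fun a _ => h a)).trans
    (by rw [Finset.filter_or]; exact Finset.card_union_le _ _)

lemma Finset.card_filter_product_le_left {β γ : Type*} {E : Finset β} {F : Finset γ}
    (R : β → γ → Prop) [∀ x y, Decidable (R x y)] {n : ℕ}
    (h : ∀ x ∈ E, (F.filter (R x)).card ≤ n) :
    ((E ×ˢ F).filter fun p => R p.1 p.2).card ≤ E.card * n := by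
  calc ((E ×ˢ F).filter fun p => R p.1 p.2).card = ∑ x ∈ E, (F.filter (R x)).card := by
        simp only [Finset.card_filter, Finset.sum_product]
    _ ≤ E.card * n := by simpa using Finset.sum_le_card_nsmul E _ n h

lemma Finset.card_filter_product_le_right {β γ : Type*} {E : Finset β} {F : Finset γ}
    (R : β → γ → Prop) [∀ x y, Decidable (R x y)] {n : ℕ}
    (h : ∀ y ∈ F, (E.filter (R · y)).card ≤ n) :
    ((E ×ˢ F).filter fun p => R p.1 p.2).card ≤ F.card * n := by
  calc ((E ×ˢ F).filter fun p => R p.1 p.2).card = ∑ y ∈ F, (E.filter (R · y)).card := by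
        simp only [Finset.card_filter, Finset.sum_product_right]
    _ ≤ F.card * n := by simpa using Finset.sum_le_card_nsmul F _ n h

def words (α : Type*) [Fintype α] (n : ℕ) : Finset (List α) :=
  (Finset.univ : Finset (List.Vector α n)).map ⟨List.Vector.toList, List.Vector.toList_injective⟩

lemma mem_words {α : Type*} [Fintype α] {n : ℕ} {w : List α} : w ∈ words α n ↔ w.length = n :=
  ⟨fun h => by obtain ⟨v, -, rfl⟩ := Finset.mem_map.1 h; exact v.2,
    fun h => Finset.mem_map.2 ⟨⟨w, h⟩, Finset.mem_univ _, rfl⟩⟩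

lemma card_words (α : Type*) [Fintype α] (n : ℕ) : (words α n).card = Fintype.card α ^ n := by
  rw [words, Finset.card_map, Finset.card_univ, card_vector]

variable {α : Type*} [DecidableEq α]

lemma lcp_comm (x y : List α) : lcp x y = lcp y x := by
  induction x, y using lcp.induct with
  | case1 as b bs ih => simp [lcp, ih]
  | case2 a as b bs h => simp [lcp, h, Ne.symm h]
  | case3 x y h => cases x <;> cases y <;> first | exact (h _ _ _ _ rfl rfl).elim | simp_all [lcp]

lemma lcp_le_length (x y : List α) : lcp x y ≤ x.length := by
  induction x, y using lcp.induct with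
  | case1 as b bs ih => simpa [lcp] using ih
  | case2 a as b bs h => simp [lcp, h]
  | case3 x y h => cases x <;> cases y <;> first | exact (h _ _ _ _ rfl rfl).elim | simp_all [lcp]

lemma take_lcp (x y : List α) : x.take (lcp x y) = y.take (lcp x y) := by
  induction x, y using lcp.induct with
  | case1 as b bs ih => simpa [lcp] using ih
  | case2 a as b bs h => simp [lcp, h]
  | case3 x y h => cases x <;> cases y <;> first | exact (h _ _ _ _ rfl rfl).elim | simp_all [lcp]

lemma getElem_ne_of_lcp_eq {x y : List α} {ℓ : ℕ} (h : lcp x y = ℓ) (hx : ℓ < x.length)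
    (hy : ℓ < y.length) : x[ℓ] ≠ y[ℓ] := by
  subst h
  induction x, y using lcp.induct with
  | case1 as b bs ih => simpa [lcp] using ih (by simpa [lcp] using hx) (by simpa [lcp] using hy)
  | case2 a as b bs h => simp [lcp, h]
  | case3 x y h =>
    cases x <;> cases y <;> first
      | exact (h _ _ _ _ rfl rfl).elim
      | exact absurd hx (Nat.not_lt_zero _)
      | exact absurd hy (Nat.not_lt_zero _)

lemma treeDist_comm (x y : List α) : treeDist x y = treeDist y x := by
  rw [treeDist, treeDist, lcp_comm]; ac_rfl

lemma take_lcp_append_drop (x y : List α) : x.take (lcp x y) ++ y.drop (lcp x y) = y := by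
  rw [take_lcp, List.take_append_drop]

lemma injOn_drop_of_lcp_eq (x : List α) (ℓ : ℕ) :
    Set.InjOn (fun y => y.drop ℓ) {y | lcp x y = ℓ} := by
  intro y hy y' hy' h
  rw [← take_lcp_append_drop x y, ← take_lcp_append_drop x y', hy, hy']
  exact congrArg _ h

def climb (x y : List α) : ℕ := x.length - lcp x y

lemma treeDist_eq_climb_add_climb (x y : List α) : treeDist x y = climb x y + climb y x := by
  rw [treeDist, climb, climb, lcp_comm y x]

lemma lcp_eq_of_climb_eq {x y : List α} {i : ℕ} (h : climb x y = i) :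
    lcp x y = x.length - i := by
  have := lcp_le_length x y
  rw [climb] at h
  omega

lemma length_drop_lcp (x y : List α) : (y.drop (lcp x y)).length = climb y x := by
  rw [List.length_drop, climb, lcp_comm]

section Counting

variable [Fintype α]

lemma card_filter_climb_eq_le_pow (x : List α) (F : Finset (List α)) (i j : ℕ) :
    (F.filter fun y => climb x y = i ∧ climb y x = j).card ≤ Fintype.card α ^ j := by
  rw [← card_words α]
  refine Finset.card_le_card_of_injOn (fun y => y.drop (x.length - i)) ?_ ?_
  · intro y hy
    obtain ⟨-, hi, hj⟩ := Finset.mem_filter.1 hy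
    rw [Finset.mem_coe, mem_words, ← lcp_eq_of_climb_eq hi, length_drop_lcp, hj]
  · refine (injOn_drop_of_lcp_eq x _).mono fun y hy => ?_
    exact lcp_eq_of_climb_eq (Finset.mem_filter.1 hy).2.1

lemma card_filter_climb_eq_le_of_pos (x : List α) (F : Finset (List α)) {i j : ℕ}
    (hi : 0 < i) (hj : 0 < j) :
    (F.filter fun y => climb x y = i ∧ climb y x = j).card
      ≤ (Fintype.card α - 1) * Fintype.card α ^ (j - 1) := by
  set ℓ := x.length - i
  by_cases hℓ : ℓ < x.length
  swap
  · refine (Finset.card_eq_zero.2 (Finset.filter_eq_empty_iff.2 ?_)).trans_le (Nat.zero_le _)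
    rintro y - ⟨hi', -⟩
    rw [climb] at hi'
    omega
  set c := x[ℓ]
  calc (F.filter fun y => climb x y = i ∧ climb y x = j).card
      ≤ (((Finset.univ.erase c) ×ˢ words α (j - 1)).image fun p => p.1 :: p.2).card := by
        refine Finset.card_le_card_of_injOn (fun y => y.drop ℓ) ?_ ?_
        · intro y hy
          obtain ⟨-, hi', hj'⟩ := Finset.mem_filter.1 hy
          have hlcp := lcp_eq_of_climb_eq hi'
          have hlen : y.length - ℓ = j := by rw [← hj', climb, lcp_comm, hlcp]
          have hℓy : ℓ < y.length := by omega
          refine Finset.mem_image.2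
            ⟨(y[ℓ], y.drop (ℓ + 1)), ?_, (List.drop_eq_getElem_cons hℓy).symm⟩
          refine Finset.mem_product.2 ⟨Finset.mem_erase.2 ⟨?_, Finset.mem_univ _⟩, ?_⟩
          · exact (getElem_ne_of_lcp_eq hlcp hℓ hℓy).symm
          · rw [mem_words, List.length_drop]; omega
        · refine (injOn_drop_of_lcp_eq x _).mono fun y hy => ?_
          exact lcp_eq_of_climb_eq (Finset.mem_filter.1 hy).2.1
    _ ≤ (Fintype.card α - 1) * Fintype.card α ^ (j - 1) := by
        refine Finset.card_image_le.trans_eq ?_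
        rw [Finset.card_product, Finset.card_erase_of_mem (Finset.mem_univ _), Finset.card_univ,
          card_words]

lemma card_filter_treeDist_eq_climb_le [Nonempty α] (x : List α) (F : Finset (List α))
    {r m : ℕ} (hm : m < r) :
    (F.filter fun y => treeDist x y = r ∧ climb y x ≤ m).card ≤ Fintype.card α ^ m := by
  induction m with
  | zero =>
    calc (F.filter fun y => treeDist x y = r ∧ climb y x ≤ 0).card
        ≤ (F.filter fun y => climb x y = r ∧ climb y x = 0).card := by
          refine Finset.card_le_card (Finset.monotone_filter_right F fun y _ => ?_)
          rw [treeDist_eq_climb_add_climb]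
          omega
      _ ≤ Fintype.card α ^ 0 := card_filter_climb_eq_le_pow x F r 0
  | succ m ih =>
    obtain ⟨k, hk⟩ := Nat.exists_eq_add_one_of_ne_zero (Fintype.card_pos (α := α)).ne'
    calc (F.filter fun y => treeDist x y = r ∧ climb y x ≤ m + 1).card
        ≤ (F.filter fun y => treeDist x y = r ∧ climb y x ≤ m).card +
            (F.filter fun y => climb x y = r - (m + 1) ∧ climb y x = m + 1).card := by
          refine Finset.card_filter_le_card_filter_add_card_filter fun y => ?_
          rw [treeDist_eq_climb_add_climb]
          omega
      _ ≤ Fintype.card α ^ m + (Fintype.card α - 1) * Fintype.card α ^ m :=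
          add_le_add (ih (by omega)) (card_filter_climb_eq_le_of_pos x F (by omega) m.succ_pos)
      _ = Fintype.card α ^ (m + 1) := by rw [hk, add_tsub_cancel_right]; ring

lemma card_filter_treeDist_eq_le [Nonempty α] (x : List α) (F : Finset (List α)) (r : ℕ) :
    (F.filter fun y => treeDist x y = r).card ≤ 2 * Fintype.card α ^ r := by
  cases r with
  | zero =>
    calc (F.filter fun y => treeDist x y = 0).card
        ≤ (F.filter fun y => climb x y = 0 ∧ climb y x = 0).card := by
          refine Finset.card_le_card (Finset.monotone_filter_right F fun y _ => ?_)
          rw [treeDist_eq_climb_add_climb]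
          omega
      _ ≤ 2 * Fintype.card α ^ 0 := (card_filter_climb_eq_le_pow x F 0 0).trans (by simp)
  | succ m =>
    calc (F.filter fun y => treeDist x y = m + 1).card
        ≤ (F.filter fun y => treeDist x y = m + 1 ∧ climb y x ≤ m).card +
            (F.filter fun y => climb x y = 0 ∧ climb y x = m + 1).card := by
          refine Finset.card_filter_le_card_filter_add_card_filter fun y => ?_
          rw [treeDist_eq_climb_add_climb]
          omega
      _ ≤ Fintype.card α ^ m + Fintype.card α ^ (m + 1) :=
          add_le_add (card_filter_treeDist_eq_climb_le x F m.lt_succ_self)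
            (card_filter_climb_eq_le_pow x F 0 _)
      _ ≤ 2 * Fintype.card α ^ (m + 1) := by
          rw [two_mul]
          gcongr
          exacts [Fintype.card_pos, m.le_succ]

section Pairs

variable [Nonempty α] (E F : Finset (List α)) (r : ℕ)

lemma card_filter_treeDist_eq_le_left :
    ((E ×ˢ F).filter fun p => treeDist p.1 p.2 = r).card ≤ E.card * (2 * Fintype.card α ^ r) :=
  Finset.card_filter_product_le_left (fun x y => treeDist x y = r) fun x _ =>
    card_filter_treeDist_eq_le x F r

lemma card_filter_treeDist_eq_le_right :
    ((E ×ˢ F).filter fun p => treeDist p.1 p.2 = r).card ≤ F.card * (2 * Fintype.card α ^ r) :=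
  Finset.card_filter_product_le_right (fun x y => treeDist x y = r) fun y _ => by
    simpa only [treeDist_comm _ y] using card_filter_treeDist_eq_le y E r

lemma card_filter_treeDist_eq_le_add {m n : ℕ} (hr : r = m + n + 1) :
    ((E ×ˢ F).filter fun p => treeDist p.1 p.2 = r).card
      ≤ E.card * Fintype.card α ^ m + F.card * Fintype.card α ^ n := by
  calc ((E ×ˢ F).filter fun p => treeDist p.1 p.2 = r).card
      ≤ ((E ×ˢ F).filter fun p => treeDist p.1 p.2 = r ∧ climb p.2 p.1 ≤ m).card +
          ((E ×ˢ F).filter fun p => treeDist p.1 p.2 = r ∧ climb p.1 p.2 ≤ n).card := by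
        refine Finset.card_filter_le_card_filter_add_card_filter fun p => ?_
        rw [treeDist_eq_climb_add_climb]
        omega
    _ ≤ E.card * Fintype.card α ^ m + F.card * Fintype.card α ^ n := by
        refine add_le_add ?_ ?_
        · exact Finset.card_filter_product_le_left (fun x y => treeDist x y = r ∧ climb y x ≤ m)
            fun x _ => card_filter_treeDist_eq_climb_le x F (by omega)
        · refine Finset.card_filter_product_le_right (fun x y => treeDist x y = r ∧ climb x y ≤ n)
            fun y _ => ?_
          simpa only [treeDist_comm _ y] using card_filter_treeDist_eq_climb_le y E (by omega)

end Pairs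

end Counting

lemma add_le_two_mul_sqrt_of_le_mul {a b t : ℝ} (ht : 1 ≤ t) (ha : 0 ≤ a) (hb : 0 ≤ b)
    (hab : a ≤ t * b) (hba : b ≤ t * a) : a + b ≤ 2 * √(t * a * b) := by
  have htab : 0 ≤ t * a * b := by positivity
  calc a + b ≤ √(2 ^ 2 * (t * a * b)) := by
        refine (Real.le_sqrt (by positivity) (by positivity)).2 ?_
        nlinarith [mul_le_mul_of_nonneg_left hab ha, mul_le_mul_of_nonneg_left hba hb,
          mul_le_mul_of_nonneg_right ht (mul_nonneg ha hb)]
    _ = 2 * √(t * a * b) := by rw [Real.sqrt_mul (by positivity), Real.sqrt_sq zero_le_two]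

lemma mul_le_sqrt_of_mul_le {a b K : ℝ} (ha : 0 ≤ a) (hK : 0 ≤ K) (h : K * a ≤ b) :
    a * K ≤ √(a * b * K) := by
  have hb : 0 ≤ b := (mul_nonneg hK ha).trans h
  refine (Real.le_sqrt (by positivity) (by positivity)).2 ?_
  nlinarith [mul_le_mul_of_nonneg_left h (mul_nonneg ha hK)]

lemma exists_balanced_split {k e f r : ℕ} (hk : 0 < k) (he : e < k ^ r * f)
    (hf : f < k ^ r * e) :
    ∃ m n, r = m + n + 1 ∧ e * k ^ m ≤ k * (f * k ^ n) ∧ f * k ^ n ≤ k * (e * k ^ m) := by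
  have hr : r ≠ 0 := by rintro rfl; simp only [pow_zero, one_mul] at he hf; omega
  have hQr : k ^ r * f < k ^ (2 * (r - 1) + 2) * e := by
    rw [show 2 * (r - 1) + 2 = r + r by omega, pow_add, mul_assoc]
    exact Nat.mul_lt_mul_of_pos_left hf (by positivity)
  have hQ : ∃ m, k ^ r * f < k ^ (2 * m + 2) * e := ⟨r - 1, hQr⟩
  classical
  set m := Nat.find hQ
  have hup : k ^ r * f < k ^ (2 * m + 2) * e := Nat.find_spec hQ
  have hlow : k ^ (2 * m) * e ≤ k ^ r * f := by
    rcases Nat.eq_zero_or_pos m with h0 | hpos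
    · rw [h0]; simpa using he.le
    · have := Nat.find_min hQ (Nat.sub_lt hpos one_pos)
      rwa [not_lt, show 2 * (m - 1) + 2 = 2 * m by omega] at this
  have hmr : m ≤ r - 1 := Nat.find_min' hQ hQr
  obtain ⟨n, hn⟩ : ∃ n, r = m + n + 1 := ⟨r - m - 1, by omega⟩
  refine ⟨m, n, hn, ?_, ?_⟩
  · refine Nat.le_of_mul_le_mul_left ?_ (pow_pos hk m)
    calc k ^ m * (e * k ^ m) = k ^ (2 * m) * e := by ring
      _ ≤ k ^ r * f := hlow
      _ = k ^ m * (k * (f * k ^ n)) := by rw [hn]; ring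
  · refine Nat.le_of_mul_le_mul_left ?_ (pow_pos hk (m + 1))
    calc k ^ (m + 1) * (f * k ^ n) = k ^ r * f := by rw [hn]; ring
      _ ≤ k ^ (2 * m + 2) * e := hup.le
      _ = k ^ (m + 1) * (k * (e * k ^ m)) := by ring

lemma le_two_mul_sqrt_of_bounds {c e f k r : ℕ} (hk : 0 < k) (hE : c ≤ e * (2 * k ^ r))
    (hF : c ≤ f * (2 * k ^ r)) (hsplit : ∀ m n, r = m + n + 1 → c ≤ e * k ^ m + f * k ^ n) :
    (c : ℝ) ≤ 2 * √(e * f * k ^ r) := by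
  rcases le_or_gt (k ^ r * e) f with hef | hef
  · calc (c : ℝ) ≤ 2 * (e * k ^ r) := by rw [mul_left_comm]; exact_mod_cast hE
      _ ≤ 2 * √(e * f * k ^ r) := by
          gcongr
          exact mul_le_sqrt_of_mul_le (by positivity) (by positivity) (by exact_mod_cast hef)
  rcases le_or_gt (k ^ r * f) e with hfe | hfe
  · calc (c : ℝ) ≤ 2 * (f * k ^ r) := by rw [mul_left_comm]; exact_mod_cast hF
      _ ≤ 2 * √(f * e * k ^ r) := by
          gcongr
          exact mul_le_sqrt_of_mul_le (by positivity) (by positivity) (by exact_mod_cast hfe)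
      _ = 2 * √(e * f * k ^ r) := by rw [mul_comm (f : ℝ)]
  obtain ⟨m, n, hr, hmn, hnm⟩ := exists_balanced_split hk hfe hef
  calc (c : ℝ) ≤ e * k ^ m + f * k ^ n := by exact_mod_cast hsplit m n hr
    _ ≤ 2 * √(k * (e * k ^ m) * (f * k ^ n)) :=
        add_le_two_mul_sqrt_of_le_mul (by exact_mod_cast hk) (by positivity) (by positivity)
          (by exact_mod_cast hmn) (by exact_mod_cast hnm)
    _ = 2 * √(e * f * k ^ r) := by rw [hr]; ring_nf

theorem stmt0 (k : ℕ) (hk : 2 ≤ k) (E F : Finset (List (Fin k))) (r : ℕ) :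
    ((((E ×ˢ F).filter (fun p => treeDist p.1 p.2 = r)).card : ℝ)) ≤
      2 * (E.card : ℝ) ^ ((1 : ℝ) / 2) * (F.card : ℝ) ^ ((1 : ℝ) / 2) *
        (k : ℝ) ^ ((r : ℝ) / 2) := by
  have hk₀ : 0 < k := by omega
  have : Nonempty (Fin k) := ⟨⟨0, hk₀⟩⟩
  have hsqrt : (k : ℝ) ^ ((r : ℝ) / 2) = √((k : ℝ) ^ r) := by
    rw [Real.sqrt_eq_rpow, ← Real.rpow_natCast, ← Real.rpow_mul (Nat.cast_nonneg k), mul_one_div]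
  rw [← Real.sqrt_eq_rpow, ← Real.sqrt_eq_rpow, hsqrt, mul_assoc 2, ← Real.sqrt_mul (by positivity),
    mul_assoc 2, ← Real.sqrt_mul (by positivity)]
  refine le_two_mul_sqrt_of_bounds hk₀ ?_ ?_ fun m n hr => ?_
  · simpa only [Fintype.card_fin] using card_filter_treeDist_eq_le_left E F r
  · simpa only [Fintype.card_fin] using card_filter_treeDist_eq_le_right E F r
  · simpa only [Fintype.card_fin] using card_filter_treeDist_eq_le_add E F r hr
end

section
/- Fix an integer K ≥ 1. There exists a finite metric measure space (X,d,μ) satisfying the doubling condition μ(B(x,2r)) ≤ K·μ(B(x,r)) for all x and r > 0, such that the Hardy-Littlewood maximal operator M satisfies ‖M‖_{L¹(X)→L^{1,∞}(X)} ≥ K − 1. Concretely, one may take X to be the star graph with hub v₀ connected to (K−1)² spokes, with graph metric, where μ assigns mass K−1 to v₀ and mass 1 to each spoke. -/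
/-!
Take the star with hub of mass `m` and `m²` spokes of mass `1`, at distance `1` from the hub and
`2` from each other. A ball is a point, a spoke together with the hub, or everything, so the
doubling constant is `m + 1`. The indicator of the hub has `L¹` norm `m`, yet its maximal function
is at least `m / (m + 1)` everywhere (use the ball of radius `1` around a spoke). Hence
`λ · μ(X) ≤ C · m` for every `λ < m / (m + 1)`, and `μ(X) = m (m + 1)` forces `C ≥ m`.
With `m = K - 1` this is the theorem for `K ≥ 2`; for `K = 1` a single atom does the job.
-/

open MeasureTheory Metric

/-- The Hardy–Littlewood maximal function of `f` with respect to the measure `μ`,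
using closed balls. -/
noncomputable def HLmax {X : Type*} [MetricSpace X] [MeasurableSpace X]
    (μ : Measure X) (f : X → ℝ) (x : X) : ℝ :=
  ⨆ r : {r : ℝ // 0 < r}, (μ (closedBall x r)).toReal⁻¹ * ∫ y in closedBall x r, |f y| ∂μ

open scoped NNReal ENNReal

section HLmax

variable {X : Type*} [MetricSpace X] [MeasurableSpace X]

def HLmaxWeakBound (μ : Measure X) (C : ℝ) : Prop :=
  ∀ f : X → ℝ, ∀ lam : ℝ, 0 < lam →
    lam * (μ {x | lam < HLmax μ f x}).toReal ≤ C * ∫ x, |f x| ∂μ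

lemma ballAverage_le_HLmax {μ : Measure X} [IsFiniteMeasure μ] {f : X → ℝ} {M : ℝ}
    (hf : ∀ y, |f y| ≤ M) (x : X) {r : ℝ} (hr : 0 < r) :
    (μ (closedBall x r)).toReal⁻¹ * ∫ y in closedBall x r, |f y| ∂μ ≤ HLmax μ f x := by
  refine le_ciSup (f := fun r : {r : ℝ // 0 < r} =>
    (μ (closedBall x r)).toReal⁻¹ * ∫ y in closedBall x r, |f y| ∂μ) ⟨M, ?_⟩ ⟨r, hr⟩
  rintro _ ⟨s, rfl⟩
  have h_int : ∫ y in closedBall x s, |f y| ∂μ ≤ μ.real (closedBall x s) * M :=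
    (Real.le_norm_self _).trans <| (norm_setIntegral_le_of_norm_le_const (measure_lt_top _ _)
      fun y _ => by simpa using hf y).trans_eq (mul_comm _ _)
  exact inv_mul_le_of_le_mul₀ measureReal_nonneg ((abs_nonneg _).trans (hf x)) h_int

lemma HLmaxWeakBound.nonneg {μ : Measure X} [NeZero μ] [IsFiniteMeasure μ] {C : ℝ}
    (hC : HLmaxWeakBound μ C) : 0 ≤ C := by
  have h := hC 1 1 one_pos
  have h_univ : 0 < μ.real Set.univ :=
    ENNReal.toReal_pos (NeZero.ne _) (measure_ne_top _ _)
  simp only [Pi.one_apply, abs_one, integral_const, smul_eq_mul, mul_one, one_mul] at h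
  exact nonneg_of_mul_nonneg_left (ENNReal.toReal_nonneg.trans h) h_univ

end HLmax

lemma setIntegral_abs_indicator_one {X : Type*} [MeasurableSpace X] (μ : Measure X) (s : Set X)
    {t : Set X} (ht : MeasurableSet t) :
    ∫ y in s, |t.indicator (1 : X → ℝ) y| ∂μ = μ.real (t ∩ s) := by
  have h_abs (y : X) : |t.indicator (1 : X → ℝ) y| = t.indicator 1 y :=
    abs_of_nonneg (Set.indicator_nonneg (fun _ _ => zero_le_one) y)
  simp_rw [h_abs]
  rw [integral_indicator_one ht, measureReal_restrict_apply ht]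

def StarSpace (ι : Type*) : Type _ := Option ι

namespace StarSpace

variable {ι : Type*}

def hub : StarSpace ι := (none : Option ι)

def spoke (i : ι) : StarSpace ι := (some i : Option ι)

def height (x : StarSpace ι) : ℝ := Option.elim (α := ι) x 0 fun _ => 1

@[simp] lemma height_hub : height (hub : StarSpace ι) = 0 := rfl

@[simp] lemma height_spoke (i : ι) : height (spoke i) = 1 := rfl

lemma height_nonneg (x : StarSpace ι) : 0 ≤ height x := by
  cases x <;> simp [height]

lemma spoke_ne_hub (i : ι) : spoke i ≠ hub := Option.some_ne_none i

lemma spoke_injective : Function.Injective (spoke : ι → StarSpace ι) := Option.some_injective ι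

lemma eq_hub_or_exists_eq_spoke (x : StarSpace ι) : x = hub ∨ ∃ i, x = spoke i := by
  cases x
  · exact .inl rfl
  · exact .inr ⟨_, rfl⟩

instance [Fintype ι] : Fintype (StarSpace ι) := inferInstanceAs (Fintype (Option ι))

instance : MeasurableSpace (StarSpace ι) := ⊤

instance : DiscreteMeasurableSpace (StarSpace ι) := ⟨fun _ => trivial⟩

open Classical in
/-- The graph metric of the star: two distinct vertices are joined through the hub. -/
noncomputable instance : MetricSpace (StarSpace ι) where
  dist x y := if x = y then 0 else height x + height y
  dist_self x := if_pos rfl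
  dist_comm x y := by
    by_cases h : x = y
    · simp [h]
    · simp [h, Ne.symm h, add_comm]
  dist_triangle x y z := by
    have := height_nonneg x; have := height_nonneg y; have := height_nonneg z
    split_ifs <;> simp_all <;> linarith
  eq_of_dist_eq_zero {x y} h := by
    by_contra hxy
    rw [if_neg hxy] at h
    cases x <;> cases y <;> first | exact hxy rfl | simp [height] at h

lemma dist_spoke_hub (i : ι) : dist (spoke i) hub = 1 := by
  simp [dist, spoke_ne_hub]

lemma dist_hub_spoke (i : ι) : dist hub (spoke i) = 1 := by
  rw [dist_comm, dist_spoke_hub]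

lemma dist_spoke_spoke {i j : ι} (h : i ≠ j) : dist (spoke i) (spoke j) = 2 := by
  simp [dist, spoke_injective.ne h]
  norm_num

lemma closedBall_hub {r : ℝ} (h0 : 0 ≤ r) (h1 : r < 1) :
    closedBall (hub : StarSpace ι) r = {hub} := by
  ext x
  rcases x.eq_hub_or_exists_eq_spoke with rfl | ⟨i, rfl⟩
  · simpa using h0
  · simpa [dist_spoke_hub, spoke_ne_hub] using h1

lemma closedBall_spoke_subset (i : ι) {r : ℝ} (h : r < 2) :
    closedBall (spoke i) r ⊆ {spoke i, hub} := by
  intro x hx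
  rcases x.eq_hub_or_exists_eq_spoke with rfl | ⟨j, rfl⟩
  · simp
  · by_cases hij : j = i
    · simp [hij]
    · rw [mem_closedBall, dist_spoke_spoke hij] at hx
      exact absurd h hx.not_gt

lemma pair_subset_closedBall_spoke (i : ι) {r : ℝ} (h : 1 ≤ r) :
    {spoke i, hub} ⊆ closedBall (spoke i) r := by
  simp [Set.insert_subset_iff, dist_hub_spoke, h, zero_le_one.trans h]

lemma closedBall_spoke_one (i : ι) : closedBall (spoke i) 1 = {spoke i, hub} :=
  (closedBall_spoke_subset i one_lt_two).antisymm (pair_subset_closedBall_spoke i le_rfl)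

noncomputable def measure [Fintype ι] (a : ℝ≥0) : Measure (StarSpace ι) :=
  (a : ℝ≥0∞) • Measure.dirac hub + ∑ i, Measure.dirac (spoke i)

variable [Fintype ι] (a : ℝ≥0)

lemma measure_hub : measure a {(hub : StarSpace ι)} = a := by
  simp [measure, spoke_ne_hub]

lemma measure_spoke (i : ι) : measure a {spoke i} = 1 := by
  classical
  simp [measure, (spoke_ne_hub i).symm, Set.indicator_apply, spoke_injective.eq_iff]

lemma measure_pair (i : ι) : measure a {spoke i, hub} = a + 1 := by
  classical
  simp [measure, Set.indicator_apply, spoke_ne_hub, spoke_injective.eq_iff]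

lemma measure_univ : measure a (Set.univ : Set (StarSpace ι)) = a + Fintype.card ι := by
  simp [measure]

instance : IsFiniteMeasure (measure (ι := ι) a) :=
  ⟨by simp [measure_univ, ENNReal.add_lt_top]⟩

lemma measure_closedBall_two_mul_le {K : ℝ≥0∞} (h_spoke : (a : ℝ≥0∞) + 1 ≤ K)
    (h_hub : (a : ℝ≥0∞) + Fintype.card ι ≤ K * a) (x : StarSpace ι) {r : ℝ} (hr : 0 < r) :
    measure a (closedBall x (2 * r)) ≤ K * measure a (closedBall x r) := by
  have h_center (x : StarSpace ι) : {x} ⊆ closedBall x r :=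
    Set.singleton_subset_iff.2 (mem_closedBall_self hr.le)
  have h_le_univ (s : Set (StarSpace ι)) : measure a s ≤ a + Fintype.card ι :=
    (measure_mono (Set.subset_univ s)).trans_eq (StarSpace.measure_univ a)
  rcases x.eq_hub_or_exists_eq_spoke with rfl | ⟨i, rfl⟩
  · calc measure a (closedBall hub (2 * r)) ≤ K * measure a {hub} := by
          rw [measure_hub (ι := ι)]; exact (h_le_univ _).trans h_hub
      _ ≤ K * measure a (closedBall hub r) := by gcongr; exact h_center _
  rcases lt_or_ge r 1 with hr1 | hr1
  · calc measure a (closedBall (spoke i) (2 * r)) ≤ measure a {spoke i, hub} :=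
          measure_mono (closedBall_spoke_subset i (by linarith))
      _ ≤ K * measure a {spoke i} := by rwa [measure_pair, measure_spoke, mul_one]
      _ ≤ K * measure a (closedBall (spoke i) r) := by gcongr; exact h_center _
  · calc measure a (closedBall (spoke i) (2 * r)) ≤ K * measure a {spoke i, hub} := by
          rw [measure_pair]
          exact (h_le_univ _).trans (h_hub.trans (by gcongr; exact le_self_add))
      _ ≤ K * measure a (closedBall (spoke i) r) := by
          gcongr; exact pair_subset_closedBall_spoke i hr1

lemma div_add_one_le_HLmax_indicator_hub (ha : 0 < a) (x : StarSpace ι) :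
    (a : ℝ) / (a + 1) ≤ HLmax (measure a) (({hub} : Set (StarSpace ι)).indicator 1) x := by
  have h_bound (y : StarSpace ι) :
      |({hub} : Set (StarSpace ι)).indicator (1 : StarSpace ι → ℝ) y| ≤ 1 := by
    simpa using norm_indicator_le_norm_self (s := {hub}) (f := (1 : StarSpace ι → ℝ)) (a := y)
  rcases x.eq_hub_or_exists_eq_spoke with rfl | ⟨i, rfl⟩
  · refine le_trans ?_ (ballAverage_le_HLmax h_bound hub one_half_pos)
    rw [closedBall_hub (by norm_num) (by norm_num),
      setIntegral_abs_indicator_one _ _ (measurableSet_singleton _), Set.inter_self,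
      measureReal_def, measure_hub, ENNReal.coe_toReal,
      inv_mul_cancel₀ (NNReal.coe_ne_zero.2 ha.ne')]
    exact div_le_one_of_le₀ (by linarith) (by positivity)
  · refine le_of_eq_of_le ?_ (ballAverage_le_HLmax h_bound (spoke i) one_pos)
    have h_inter : ({hub} ∩ {spoke i, hub} : Set (StarSpace ι)) = {hub} := by simp
    rw [closedBall_spoke_one, setIntegral_abs_indicator_one _ _ (measurableSet_singleton _),
      h_inter, measureReal_def, measure_pair, measure_hub, div_eq_inv_mul]
    norm_cast

lemma div_le_of_HLmaxWeakBound {C : ℝ} (ha : 0 < a)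
    (hC : HLmaxWeakBound (measure (ι := ι) a) C) :
    ((a : ℝ) + Fintype.card ι) / (a + 1) ≤ C := by
  set f := ({hub} : Set (StarSpace ι)).indicator (1 : StarSpace ι → ℝ)
  set S : ℝ := a + Fintype.card ι
  have haR : (0 : ℝ) < a := ha
  have hS : 0 < S := by positivity
  have h_norm : ∫ x, |f x| ∂(measure a) = a := by
    simpa [measureReal_def, measure_hub] using
      setIntegral_abs_indicator_one (measure a) Set.univ (measurableSet_singleton hub)
  have h_lam (lam : ℝ) (h0 : 0 < lam) (h1 : lam < a / (a + 1)) : lam ≤ C * a / S := by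
    have h_univ : {x | lam < HLmax (measure a) f x} = Set.univ :=
      Set.eq_univ_of_forall fun x => h1.trans_le (div_add_one_le_HLmax_indicator_hub a ha x)
    have h_weak := hC f lam h0
    rw [h_univ, h_norm, StarSpace.measure_univ] at h_weak
    rw [le_div_iff₀ hS]
    simpa [S, ENNReal.toReal_add] using h_weak
  have h_lim : (a : ℝ) / (a + 1) ≤ C * a / S := by
    have ht : (0 : ℝ) < a / (a + 1) := by positivity
    refine le_of_forall_lt_imp_le_of_dense fun lam hlam =>
      (le_max_left lam (a / (a + 1) / 2)).trans ?_
    exact h_lam _ (lt_max_of_lt_right (half_pos ht)) (max_lt hlam (half_lt_self ht))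
  rw [div_le_div_iff₀ (by positivity) hS] at h_lim
  rw [div_le_iff₀ (by positivity)]
  exact le_of_mul_le_mul_left (by linarith) haR

end StarSpace

/-- There is a finite metric measure space satisfying the doubling condition
`μ(B(x,2r)) ≤ K·μ(B(x,r))` whose Hardy–Littlewood maximal operator has weak (1,1)
norm at least `K - 1`. -/
theorem stmt3 (K : ℕ) (hK : 1 ≤ K) :
    ∃ (X : Type) (_ : MetricSpace X) (_ : MeasurableSpace X) (_ : Fintype X)
      (μ : Measure X),
      (∀ x : X, ∀ r : ℝ, 0 < r →
        μ (closedBall x (2 * r)) ≤ (K : ENNReal) * μ (closedBall x r)) ∧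
      (∀ C : ℝ,
        (∀ f : X → ℝ, ∀ lam : ℝ, 0 < lam →
          lam * (μ {x | lam < HLmax μ f x}).toReal ≤ C * ∫ x, |f x| ∂μ) →
        (K : ℝ) - 1 ≤ C) := by
  obtain rfl | ⟨m, hm, rfl⟩ : K = 1 ∨ ∃ m, 0 < m ∧ K = m + 1 :=
    (eq_or_lt_of_le hK).imp Eq.symm fun h => ⟨K - 1, by omega, by omega⟩
  · refine ⟨PUnit, inferInstance, inferInstance, inferInstance, Measure.dirac PUnit.unit,
      fun x r hr => ?_, fun C hC => by simpa using HLmaxWeakBound.nonneg hC⟩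
    rw [Measure.dirac_apply_of_mem (mem_closedBall_self hr.le), Nat.cast_one, one_mul]
    exact prob_le_one
  · refine ⟨StarSpace (Fin (m * m)), inferInstance, inferInstance, inferInstance,
      StarSpace.measure m, StarSpace.measure_closedBall_two_mul_le _ ?_ ?_, fun C hC => ?_⟩
    · push_cast; rfl
    · rw [Fintype.card_fin]; push_cast; exact (by ring : _ = _).le
    · have h := StarSpace.div_le_of_HLmaxWeakBound m (by exact_mod_cast hm) hC
      simp only [NNReal.coe_natCast, Fintype.card_fin, Nat.cast_mul] at h
      rw [show ((m : ℝ) + m * m) / (m + 1) = m by field_simp; ring] at h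
      push_cast; linarith
end

section
/- Let X = {0, e₁, ..., e_n} ⊆ ℝⁿ (the origin together with the standard basis vectors) with the Euclidean metric and counting measure μ. Then the doubling condition μ(B(x,2r)) ≤ (n+1)·μ(B(x,r)) holds for all x ∈ X, r > 0, and the Hardy-Littlewood maximal operator on X satisfies ‖M‖_{L¹(X)→L^{1,∞}(X)} ≥ (n+1)/2. -/
open MeasureTheory Metric

/-- The finite subset `X = {0, e₁, …, e_n}` of Euclidean space, as a subtype. -/
def StarSet (n : ℕ) : Type :=
  {x : EuclideanSpace ℝ (Fin n) // x = 0 ∨ ∃ i : Fin n, x = EuclideanSpace.single i 1}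

noncomputable instance (n : ℕ) : MetricSpace (StarSet n) :=
  Subtype.metricSpace

instance (n : ℕ) : MeasurableSpace (StarSet n) := ⊤

/-!
Every ball contains its centre and `X` has `n + 1` points, which gives the doubling bound.
For `f = 𝟙_{0}` every point sees the origin in a ball of at most two points
(`B(0, 1/2) = {0}`, `B(eᵢ, 1) = {0, eᵢ}`), so `Mf ≥ 1/2` on all of `X`. Hence for `λ < 1/2` the
level set `{Mf > λ}` is all of `X`, and letting `λ → 1/2` gives `(n + 1)/2 ≤ C ‖f‖₁ = C`.
-/

open Topology Set

theorem MeasureTheory.Measure.count_le_count_univ_mul {α : Type*} [MeasurableSpace α]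
    [MeasurableSingletonClass α] (s : Set α) {t : Set α} (ht : t.Nonempty) :
    Measure.count s ≤ Measure.count (univ : Set α) * Measure.count t := by
  obtain ⟨x, hx⟩ := ht
  calc Measure.count s ≤ Measure.count (univ : Set α) := measure_mono (subset_univ s)
    _ = Measure.count (univ : Set α) * Measure.count {x} := by rw [Measure.count_singleton, mul_one]
    _ ≤ Measure.count (univ : Set α) * Measure.count t := by
      gcongr; exact singleton_subset_iff.2 hx

theorem abs_indicator_one {α : Type*} (s : Set α) (y : α) :
    |s.indicator (1 : α → ℝ) y| = s.indicator 1 y :=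
  abs_of_nonneg (indicator_nonneg (fun _ _ => zero_le_one) y)

section HLmax

variable {X : Type*} [MetricSpace X] [MeasurableSpace X] {μ : Measure X} {f : X → ℝ}

theorem ballAverage_abs_le {K : ℝ} (hf : ∀ y, |f y| ≤ K) (x : X) (r : ℝ) :
    (μ (closedBall x r)).toReal⁻¹ * ∫ y in closedBall x r, |f y| ∂μ ≤ K := by
  have hK : 0 ≤ K := (abs_nonneg _).trans (hf x)
  rw [← measureReal_def]
  by_cases hB : μ.real (closedBall x r) = 0
  · simpa [hB] using hK
  have hint : ∫ y in closedBall x r, |f y| ∂μ ≤ K * μ.real (closedBall x r) := by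
    refine (le_abs_self _).trans ?_
    simpa using norm_setIntegral_le_of_norm_le_const (f := fun y => |f y|)
      (ENNReal.toReal_ne_zero.1 hB).2.lt_top (fun y _ => by simpa using hf y)
  calc _ ≤ (μ.real (closedBall x r))⁻¹ * (K * μ.real (closedBall x r)) := by gcongr
    _ = K := by field_simp

theorem ballAverage_abs_le_HLmax {K : ℝ} (hf : ∀ y, |f y| ≤ K) (x : X) {r : ℝ} (hr : 0 < r) :
    (μ (closedBall x r)).toReal⁻¹ * ∫ y in closedBall x r, |f y| ∂μ ≤ HLmax μ f x :=
  le_ciSup (f := fun r : {r : ℝ // 0 < r} =>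
      (μ (closedBall x r)).toReal⁻¹ * ∫ y in closedBall x r, |f y| ∂μ)
    ⟨K, by rintro _ ⟨r, rfl⟩; exact ballAverage_abs_le hf x r⟩ ⟨r, hr⟩

theorem measureReal_singleton_div_le_HLmax_indicator [MeasurableSingletonClass X] {a x : X}
    {r : ℝ} (hr : 0 < r) (ha : a ∈ closedBall x r) :
    μ.real {a} / μ.real (closedBall x r) ≤ HLmax μ (Set.indicator {a} 1) x := by
  have h := ballAverage_abs_le_HLmax (μ := μ) (f := Set.indicator {a} 1) (K := 1) (fun y => by
      rw [abs_indicator_one]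
      exact indicator_le' (fun _ _ => le_rfl) (fun _ _ => zero_le_one) y) x hr
  simp only [abs_indicator_one] at h
  rwa [integral_indicator_one (measurableSet_singleton a),
    measureReal_restrict_apply (measurableSet_singleton a), singleton_inter_of_mem ha,
    ← measureReal_def, inv_mul_eq_div] at h

theorem mul_toReal_measure_univ_le_of_le_HLmax {a C : ℝ} (ha : 0 < a) (hfa : ∀ x, a ≤ HLmax μ f x)
    (hC : ∀ lam : ℝ, 0 < lam → lam * (μ {x | lam < HLmax μ f x}).toReal ≤ C * ∫ x, |f x| ∂μ) :
    a * (μ univ).toReal ≤ C * ∫ x, |f x| ∂μ := by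
  refine le_of_tendsto (x := 𝓝[<] a)
    ((continuous_mul_const _).tendsto a |>.mono_left nhdsWithin_le_nhds) ?_
  filter_upwards [Ioo_mem_nhdsLT ha] with lam ⟨hlam, hlam_lt⟩
  have hlevel : {x | lam < HLmax μ f x} = univ :=
    eq_univ_of_forall fun x => hlam_lt.trans_le (hfa x)
  simpa [hlevel] using hC lam hlam

end HLmax

namespace StarSet

variable {n : ℕ}

noncomputable def origin : StarSet n := ⟨0, .inl rfl⟩

noncomputable def basis (i : Fin n) : StarSet n := ⟨EuclideanSpace.single i 1, .inr ⟨i, rfl⟩⟩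

theorem eq_origin_or_eq_basis (x : StarSet n) : x = origin ∨ ∃ i, x = basis i := by
  obtain ⟨x, rfl | ⟨i, rfl⟩⟩ := x
  exacts [.inl rfl, .inr ⟨i, rfl⟩]

theorem basis_ne_origin (i : Fin n) : basis i ≠ origin := fun h => by
  simpa [basis, origin] using congrArg Subtype.val h

theorem basis_injective : Function.Injective (basis : Fin n → StarSet n) := fun _ _ h =>
  (EuclideanSpace.orthonormal_single (𝕜 := ℝ)).linearIndependent.injective
    (congrArg Subtype.val h)

noncomputable def equivOption : Option (Fin n) ≃ StarSet n :=
  Equiv.ofBijective (fun o => o.elim origin basis) <| by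
    refine ⟨?_, fun x => ?_⟩
    · rintro (_ | i) (_ | j) h
      exacts [rfl, (basis_ne_origin j h.symm).elim, (basis_ne_origin i h).elim,
        congrArg some (basis_injective h)]
    · obtain rfl | ⟨i, rfl⟩ := eq_origin_or_eq_basis x
      exacts [⟨none, rfl⟩, ⟨some i, rfl⟩]

theorem count_univ : Measure.count (univ : Set (StarSet n)) = n + 1 := by
  rw [Measure.count_univ, ← ENat.card_congr equivOption]
  simp

theorem dist_basis_origin (i : Fin n) : dist (basis i) origin = 1 := by
  show dist (EuclideanSpace.single i (1 : ℝ)) 0 = 1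
  simp

theorem one_lt_dist_basis {i j : Fin n} (hij : i ≠ j) : 1 < dist (basis i) (basis j) := by
  show 1 < dist (EuclideanSpace.single i (1 : ℝ)) (EuclideanSpace.single j 1)
  have h : dist (EuclideanSpace.single i (1 : ℝ)) (EuclideanSpace.single j 1) *
      dist (EuclideanSpace.single i (1 : ℝ)) (EuclideanSpace.single j 1) = 2 := by
    rw [dist_eq_norm, norm_sub_sq_eq_norm_sq_add_norm_sq_real
      (EuclideanSpace.orthonormal_single.2 hij)]
    simp; norm_num
  nlinarith [dist_nonneg (x := EuclideanSpace.single i (1 : ℝ)) (y := EuclideanSpace.single j 1)]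

theorem closedBall_origin : closedBall (origin : StarSet n) (1 / 2) = {origin} := by
  ext x
  obtain rfl | ⟨i, rfl⟩ := eq_origin_or_eq_basis x
  · simp
  · simp [dist_basis_origin, basis_ne_origin]; norm_num

theorem closedBall_basis (i : Fin n) : closedBall (basis i) 1 = {origin, basis i} := by
  ext x
  obtain rfl | ⟨j, rfl⟩ := eq_origin_or_eq_basis x
  · simp [dist_comm, dist_basis_origin]
  · rcases eq_or_ne j i with rfl | hji
    · simp
    · simp [(one_lt_dist_basis hji).not_ge, (basis_ne_origin j), basis_injective.ne hji]

theorem half_le_HLmax_indicator_origin (x : StarSet n) :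
    1 / 2 ≤ HLmax Measure.count (Set.indicator {origin} 1) x := by
  obtain rfl | ⟨i, rfl⟩ := eq_origin_or_eq_basis x
  · have h := measureReal_singleton_div_le_HLmax_indicator (μ := Measure.count)
      (by norm_num : (0 : ℝ) < 1 / 2)
      (mem_closedBall_self (by norm_num) : (origin : StarSet n) ∈ _)
    rw [closedBall_origin, div_self (by simp)] at h
    linarith
  · have h := measureReal_singleton_div_le_HLmax_indicator (μ := Measure.count) one_pos
      (by simp [dist_comm, dist_basis_origin] : origin ∈ closedBall (basis i) 1)
    rw [closedBall_basis, measureReal_def (s := {origin, basis i}),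
      Measure.count_apply MeasurableSpace.measurableSet_top,
      encard_pair (basis_ne_origin i).symm] at h
    simpa using h

end StarSet

theorem stmt4_general (n : ℕ) :
    (∀ x : StarSet n, ∀ r : ℝ, 0 < r →
      Measure.count (closedBall x (2 * r)) ≤ ((n : ENNReal) + 1) * Measure.count (closedBall x r)) ∧
    (∀ C : ℝ,
      (∀ f : StarSet n → ℝ, ∀ lam : ℝ, 0 < lam →
        lam * (Measure.count {x | lam < HLmax Measure.count f x}).toReal ≤
          C * ∫ x, |f x| ∂(Measure.count : Measure (StarSet n))) →
      ((n : ℝ) + 1) / 2 ≤ C) := by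
  refine ⟨fun x r hr => ?_, fun C hC => ?_⟩
  · rw [← StarSet.count_univ]
    exact Measure.count_le_count_univ_mul _ ⟨x, mem_closedBall_self hr.le⟩
  · have h := mul_toReal_measure_univ_le_of_le_HLmax (by norm_num)
      StarSet.half_le_HLmax_indicator_origin (hC _)
    simp only [abs_indicator_one, integral_indicator_one (measurableSet_singleton _),
      count_real_singleton, StarSet.count_univ, ← Nat.cast_add_one, ENNReal.toReal_natCast] at h
    push_cast at h
    linarith

/-- On `X = {0, e₁, …, e_n} ⊆ ℝⁿ` with the Euclidean metric and counting measure,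
the doubling condition holds with constant `n + 1` and the Hardy–Littlewood maximal
operator has weak (1,1) norm at least `(n+1)/2`. -/
theorem stmt4 (n : ℕ) (hn : 1 ≤ n) :
    (∀ x : StarSet n, ∀ r : ℝ, 0 < r →
      Measure.count (closedBall x (2 * r)) ≤ ((n : ENNReal) + 1) * Measure.count (closedBall x r)) ∧
    (∀ C : ℝ,
      (∀ f : StarSet n → ℝ, ∀ lam : ℝ, 0 < lam →
        lam * (Measure.count {x | lam < HLmax Measure.count f x}).toReal ≤
          C * ∫ x, |f x| ∂(Measure.count : Measure (StarSet n))) →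
      ((n : ℝ) + 1) / 2 ≤ C) :=
  stmt4_general n
end

section
/- Let q be an odd prime power, m ≥ 1, and for z ∈ F_q let E_z = {x ∈ F_q^m : x₁² + ... + x_m² = z}. Then for every z, ||E_z| − q^{m−1}| ≤ q^{m/2}. In particular, if q^{m/2 - 1} ≥ 2 then q^m/(2q) < |E_z| < 2q^m/q. -/
/-!
Writing `1[Q x = z] = q⁻¹ ∑_y ψ (y (Q x - z))` for a primitive additive character `ψ` and
factoring over the coordinates gives `|E_z| q = ∑_y ψ (-y z) G(y)^m` with `G(y) = ∑_x ψ (y x²)`.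
The term `y = 0` is `q^m`; for `y ≠ 0`, `G(y)` is a quadratic Gauss sum, of absolute value `√q`,
so the other `q - 1` terms contribute at most `(q - 1) q^{m/2}`.
-/

open Finset

namespace AddChar

variable {A R : Type*} [AddCommMonoid A] [CommMonoid R]

lemma map_sum_eq_prod {ι : Type*} (ψ : AddChar A R) (s : Finset ι) (f : ι → A) :
    ψ (∑ i ∈ s, f i) = ∏ i ∈ s, ψ (f i) := by
  classical
  induction s using Finset.induction_on with
  | empty => simp
  | insert a s ha ih => rw [sum_insert ha, prod_insert ha, map_add_eq_mul, ih]

lemma sum_pi_map_sum_eq_pow {R : Type*} [CommSemiring R] {κ : Type*} [Fintype κ]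
    (ψ : AddChar A R) (g : κ → A) (m : ℕ) :
    ∑ x : Fin m → κ, ψ (∑ i, g (x i)) = (∑ a, ψ (g a)) ^ m := by
  simp only [Fintype.sum_pow, map_sum_eq_prod]

lemma card_fiber_mul_card_eq_sum {R R' ι : Type*} [CommRing R] [Fintype R] [DecidableEq R]
    [CommRing R'] [IsDomain R'] [Fintype ι] {ψ : AddChar R R'} (hψ : ψ.IsPrimitive)
    (f : ι → R) (z : R) :
    (#{i | f i = z} : R') * Fintype.card R = ∑ y, ψ (-(y * z)) * ∑ i, ψ (y * f i) := by
  have hdetect (i : ι) :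
      ∑ y, ψ (y * (f i - z)) = if f i = z then (Fintype.card R : R') else 0 := by
    rw [sum_mulShift _ hψ]
    simp [sub_eq_zero]
  calc (#{i | f i = z} : R') * Fintype.card R
      = ∑ i, if f i = z then (Fintype.card R : R') else 0 := by
        rw [← sum_filter, sum_const, nsmul_eq_mul]
    _ = ∑ y, ∑ i, ψ (y * (f i - z)) := by
        rw [sum_comm]; exact sum_congr rfl fun i _ => (hdetect i).symm
    _ = ∑ y, ψ (-(y * z)) * ∑ i, ψ (y * f i) := by
        refine sum_congr rfl fun y _ => ?_
        rw [mul_sum]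
        refine sum_congr rfl fun i _ => ?_
        rw [← map_add_eq_mul, mul_sub, neg_add_eq_sub]

end AddChar

section QuadraticGaussSum

variable {F : Type*} [Field F] [Fintype F] [DecidableEq F]

lemma sum_addChar_sq_eq_gaussSum {R : Type*} [CommRing R] [IsDomain R] (hF : ringChar F ≠ 2)
    {ψ : AddChar F R} (hψ : ψ ≠ 1) :
    ∑ x, ψ (x ^ 2) = gaussSum ((quadraticChar F).ringHomComp (Int.castRingHom R)) ψ := by
  have hfiber (t : F) : ∑ x with x ^ 2 = t, ψ (x ^ 2)
      = (quadraticChar F t + 1 : R) * ψ t := by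
    have hcard : (#{x : F | x ^ 2 = t} : ℤ) = quadraticChar F t + 1 := by
      simpa [Set.toFinset_ofPred] using quadraticChar_card_sqrts hF t
    rw [sum_congr rfl fun x hx => by rw [(mem_filter.mp hx).2], sum_const, nsmul_eq_mul]
    exact_mod_cast congrArg (fun n : ℤ => (n : R) * ψ t) hcard
  rw [← sum_fiberwise univ (fun x : F => x ^ 2), sum_congr rfl fun t _ => hfiber t]
  simp only [add_mul, one_mul, sum_add_distrib, AddChar.sum_eq_zero_of_ne_one hψ, add_zero]
  rfl

lemma norm_sum_addChar_sq (hF : ringChar F ≠ 2) {ψ : AddChar F ℂ} (hψ : ψ ≠ 1) :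
    ‖∑ x, ψ (x ^ 2)‖ = √(Fintype.card F) := by
  set χ := (quadraticChar F).ringHomComp (Int.castRingHom ℂ)
  have hχ : χ ≠ 1 := fun h => quadraticChar_ne_one hF
    ((MulChar.ringHomComp_eq_one_iff Int.cast_injective).mp h)
  have hsq : (‖gaussSum χ ψ‖ ^ 2 : ℂ) = Fintype.card F := by
    rw [← Complex.mul_conj', ← Complex.star_def, star_gaussSum_eq,
      gaussSum_mul_gaussSum_eq_card hχ (AddChar.IsPrimitive.of_ne_one hψ)]
  rw [sum_addChar_sq_eq_gaussSum hF hψ, ← Real.sqrt_sq (norm_nonneg _)]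
  exact congrArg Real.sqrt (mod_cast hsq)

end QuadraticGaussSum

lemma abs_card_sumSq_eq_mul_card_sub_pow_le {F : Type*} [Field F] [Fintype F] [DecidableEq F]
    (hF : ringChar F ≠ 2) (m : ℕ) (z : F) :
    |(#{x : Fin m → F | ∑ i, x i ^ 2 = z} : ℝ) * Fintype.card F - (Fintype.card F : ℝ) ^ m|
      ≤ (Fintype.card F - 1) * √(Fintype.card F) ^ m := by
  set q := Fintype.card F
  obtain ⟨ψ, hψ⟩ : ∃ ψ : AddChar F ℂ, ψ.IsPrimitive :=
    ⟨_, AddChar.FiniteField.primitiveChar_to_Complex_isPrimitive F⟩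
  set T : F → ℂ := fun y => ψ (-(y * z)) * (∑ a, ψ (y * a ^ 2)) ^ m
  have hcount : (#{x : Fin m → F | ∑ i, x i ^ 2 = z} : ℂ) * q = ∑ y, T y := by
    rw [AddChar.card_fiber_mul_card_eq_sum hψ]
    refine sum_congr rfl fun y _ => ?_
    simp only [T, ← AddChar.mulShift_apply (ψ := ψ)]
    exact congrArg _ ((ψ.mulShift y).sum_pi_map_sum_eq_pow (· ^ 2) m)
  have hT0 : T 0 = (q : ℂ) ^ m := by simp [T, q]
  have hT (y : F) (hy : y ∈ univ.erase 0) : ‖T y‖ = √q ^ m := by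
    simp only [T, norm_mul, norm_pow, AddChar.norm_apply, one_mul, ← AddChar.mulShift_apply]
    rw [norm_sum_addChar_sq hF (hψ (ne_of_mem_erase hy))]
  have hcomplex : ‖(#{x : Fin m → F | ∑ i, x i ^ 2 = z} : ℂ) * q - (q : ℂ) ^ m‖
      ≤ (q - 1) * √q ^ m := by
    rw [hcount, ← add_sum_erase _ _ (mem_univ 0), hT0, add_sub_cancel_left]
    refine (norm_sum_le _ _).trans_eq ?_
    rw [sum_congr rfl hT, sum_const, card_erase_of_mem (mem_univ _), card_univ, nsmul_eq_mul,
      Nat.cast_pred Fintype.card_pos]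
  exact_mod_cast hcomplex

lemma abs_sub_pow_pred_lt_of_abs_mul_sub_pow_le {q N : ℝ} {m : ℕ} (hq : 0 < q) (hm : 1 ≤ m)
    (h : |N * q - q ^ m| ≤ (q - 1) * √q ^ m) :
    |N - q ^ (m - 1)| < q ^ ((m : ℝ) / 2) := by
  have hpow : √q ^ m = q ^ ((m : ℝ) / 2) := by
    rw [Real.sqrt_eq_rpow, ← Real.rpow_natCast, ← Real.rpow_mul hq.le, one_div_mul_eq_div]
  have hfactor : N * q - q ^ m = (N - q ^ (m - 1)) * q := by
    rw [sub_mul, ← pow_succ, Nat.sub_add_cancel hm]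
  rw [hfactor, abs_mul, abs_of_pos hq] at h
  rw [← hpow, ← mul_lt_mul_iff_left₀ hq]
  nlinarith [pow_pos (Real.sqrt_pos.mpr hq) m]

lemma bounds_of_abs_sub_pow_pred_lt {q N : ℝ} {m : ℕ} (hq : 0 < q) (hm : 1 ≤ m)
    (h : |N - q ^ (m - 1)| < q ^ ((m : ℝ) / 2)) (h2 : 2 ≤ q ^ ((m : ℝ) / 2 - 1)) :
    q ^ m / (2 * q) < N ∧ N < 2 * q ^ m / q := by
  have hsplit : q ^ (m - 1) = q ^ ((m : ℝ) / 2 - 1) * q ^ ((m : ℝ) / 2) := by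
    rw [← Real.rpow_add hq, ← Real.rpow_natCast, Nat.cast_pred hm]
    ring_nf
  have hqm : q ^ m = q ^ (m - 1) * q := by rw [← pow_succ, Nat.sub_add_cancel hm]
  have hhalf : 2 * q ^ ((m : ℝ) / 2) ≤ q ^ (m - 1) := by
    rw [hsplit]; exact mul_le_mul_of_nonneg_right h2 (Real.rpow_pos_of_pos hq _).le
  have hlower : q ^ m / (2 * q) = q ^ (m - 1) / 2 := by rw [hqm]; field_simp
  have hupper : 2 * q ^ m / q = 2 * q ^ (m - 1) := by rw [hqm]; field_simp
  rw [hlower, hupper]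
  rw [abs_lt] at h
  constructor <;> linarith

/-- For `F` a finite field of odd order `q` and `E_z = {x ∈ F^m : x₁² + ⋯ + x_m² = z}`,
one has `||E_z| − q^{m−1}| ≤ q^{m/2}`; in particular, if `q^{m/2−1} ≥ 2` then
`q^m/(2q) < |E_z| < 2 q^m / q`. -/
theorem stmt10 (F : Type*) [Field F] [Fintype F] [DecidableEq F]
    (hodd : Odd (Fintype.card F)) (m : ℕ) (hm : 1 ≤ m) (z : F) :
    |((univ.filter (fun x : Fin m → F => ∑ i, x i ^ 2 = z)).card : ℝ) -
        (Fintype.card F : ℝ) ^ (m - 1)| ≤ (Fintype.card F : ℝ) ^ ((m : ℝ) / 2) ∧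
    (2 ≤ (Fintype.card F : ℝ) ^ ((m : ℝ) / 2 - 1) →
      (Fintype.card F : ℝ) ^ m / (2 * Fintype.card F) <
          ((univ.filter (fun x : Fin m → F => ∑ i, x i ^ 2 = z)).card : ℝ) ∧
        ((univ.filter (fun x : Fin m → F => ∑ i, x i ^ 2 = z)).card : ℝ) <
          2 * (Fintype.card F : ℝ) ^ m / Fintype.card F) := by
  have hF : ringChar F ≠ 2 := fun h => by
    have := FiniteField.even_card_of_char_two h
    rw [Nat.odd_iff] at hodd
    omega
  have hq : (0 : ℝ) < Fintype.card F := by exact_mod_cast Fintype.card_pos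
  have h := abs_sub_pow_pred_lt_of_abs_mul_sub_pow_le hq hm
    (abs_card_sumSq_eq_mul_card_sub_pow_le hF m z)
  exact ⟨h.le, bounds_of_abs_sub_pow_pred_lt hq hm h⟩
end

section
/- Let X = X_q × F_3^q where X_q is an F_3-vector space, with flags {0}=W_{−M}⊆…⊆W_0=X_q and {0}=V_0⊆…⊆V_q=F_3^q, symmetric sets E_1,…,E_q ⊆ X_q, and an integer k ≥ 1. Define nested symmetric sets B_j for −M ≤ j ≤ q by B_j = W_j × {0} for j ≤ 0 and B_j = (X_q × V_j) ∪ ⋃_{ℓ=1}^{min{j+k,q}} (E_ℓ × V_ℓ) for j ≥ 1, and define d(x,y) = min{3^{j/n} : x − y ∈ B_j} for x ≠ y, d(x,x) = 0. If n is large enough that 3^{j''/n} > 3^{j/n} + 3^{j'/n} with −M < j,j',j'' ≤ q implies j'' > max{j,j'}+k, then d is a translation-invariant metric on X. -/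
open scoped Classical

/-- The nested symmetric sets `B_j ⊆ X_q × F₃^q` built from the flags `W`, `V` and the
sets `E_ℓ`: for `j ≤ 0`, `B_j = W_j × {0}` (here `W i` denotes `W_{−i}`), and for
`j ≥ 1`, `B_j = (X_q × V_j) ∪ ⋃_{ℓ=1}^{min(j+k,q)} (E_ℓ × V_ℓ)`. -/
def Bset {Xq : Type*} (q k : ℕ) (W : ℕ → Set Xq) (V : ℕ → Set (Fin q → ZMod 3))
    (E : ℕ → Set Xq) (j : ℤ) : Set (Xq × (Fin q → ZMod 3)) :=
  if j ≤ 0 then {p | p.1 ∈ W (-j).toNat ∧ p.2 = 0}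
  else {p | p.2 ∈ V j.toNat} ∪
    ⋃ ℓ ∈ Set.Icc 1 (min (j.toNat + k) q), {p | p.1 ∈ E ℓ ∧ p.2 ∈ V ℓ}

section helpers

variable {Xq : Type*} [AddCommGroup Xq] {q M k : ℕ} {W : ℕ → Set Xq}
  {V : ℕ → Set (Fin q → ZMod 3)} {E : ℕ → Set Xq}

lemma mem_Bset_top (hq : 1 ≤ q) (hVq : V q = Set.univ) (p : Xq × (Fin q → ZMod 3)) :
    p ∈ Bset q k W V E (q : ℤ) := by
  unfold Bset
  rw [if_neg (by omega)]
  left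
  simp [hVq]

lemma Bset_neg (hWgrp : ∀ i ≤ M, (0 : Xq) ∈ W i ∧ (∀ a b : Xq, a ∈ W i → b ∈ W i → a + b ∈ W i) ∧
      (∀ a : Xq, a ∈ W i → -a ∈ W i))
    (hVgrp : ∀ j ≤ q, (0 : Fin q → ZMod 3) ∈ V j ∧
      (∀ a b, a ∈ V j → b ∈ V j → a + b ∈ V j) ∧ (∀ a, a ∈ V j → -a ∈ V j))
    (hE : ∀ ℓ (a : Xq), a ∈ E ℓ → -a ∈ E ℓ)
    {j : ℤ} (hjM : -(M : ℤ) ≤ j) (hjq : j ≤ q)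
    {p : Xq × (Fin q → ZMod 3)} (hp : p ∈ Bset q k W V E j) :
    -p ∈ Bset q k W V E j := by
  unfold Bset at hp ⊢
  split_ifs at hp ⊢ with h
  · exact ⟨(hWgrp (-j).toNat (by omega)).2.2 _ hp.1, by simp [hp.2]⟩
  · rcases hp with hp | hp
    · exact Or.inl ((hVgrp j.toNat (by omega)).2.2 _ hp)
    · right
      simp only [Set.mem_iUnion, Set.mem_Icc, Set.mem_setOf_eq] at hp ⊢
      obtain ⟨ℓ, hℓ, h1, h2⟩ := hp
      exact ⟨ℓ, hℓ, hE ℓ _ h1, (hVgrp ℓ (by omega)).2.2 _ h2⟩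

lemma Bset_snd (hV0 : V 0 = {0}) (hVmono : Monotone V)
    {j : ℤ} (hjq : j ≤ q) {m : ℕ} (hm : min (j.toNat + k) q ≤ m)
    {p : Xq × (Fin q → ZMod 3)} (hp : p ∈ Bset q k W V E j) :
    p.2 ∈ V m := by
  unfold Bset at hp
  split_ifs at hp with h
  · rw [hp.2]
    exact hVmono (Nat.zero_le m) (by simp [hV0])
  · rcases hp with hp | hp
    · exact hVmono (by omega) hp
    · simp only [Set.mem_iUnion, Set.mem_Icc, Set.mem_setOf_eq] at hp
      obtain ⟨ℓ, hℓ, _, h2⟩ := hp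
      exact hVmono (by omega) h2

lemma Bset_add (hq : 1 ≤ q)
    (hWgrp : ∀ i ≤ M, (0 : Xq) ∈ W i ∧ (∀ a b : Xq, a ∈ W i → b ∈ W i → a + b ∈ W i) ∧
      (∀ a : Xq, a ∈ W i → -a ∈ W i))
    (hWanti : Antitone W)
    (hV0 : V 0 = {0}) (hVmono : Monotone V)
    (hVgrp : ∀ j ≤ q, (0 : Fin q → ZMod 3) ∈ V j ∧
      (∀ a b, a ∈ V j → b ∈ V j → a + b ∈ V j) ∧ (∀ a, a ∈ V j → -a ∈ V j))
    {j j' : ℤ} (hjM : -(M : ℤ) < j) (hjq : j ≤ q) (hj'M : -(M : ℤ) < j') (hj'q : j' ≤ q)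
    {a b : Xq × (Fin q → ZMod 3)}
    (ha : a ∈ Bset q k W V E j) (hb : b ∈ Bset q k W V E j') :
    ∃ j'' : ℤ, -(M : ℤ) < j'' ∧ j'' ≤ q ∧ j'' ≤ max j j' + k ∧
      a + b ∈ Bset q k W V E j'' := by
  wlog h : j ≤ j' generalizing j j' a b
  · obtain ⟨j'', h1, h2, h3, h4⟩ := this hj'M hj'q hjM hjq hb ha (by omega)
    exact ⟨j'', h1, h2, by omega, by rwa [add_comm]⟩
  rcases le_or_gt j' 0 with h0 | h0
  · refine ⟨j', hj'M, hj'q, by omega, ?_⟩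
    unfold Bset at ha hb ⊢
    rw [if_pos (by omega)] at ha
    rw [if_pos h0] at hb ⊢
    refine ⟨(hWgrp (-j').toNat (by omega)).2.1 _ _
      (hWanti (show (-j').toNat ≤ (-j).toNat by omega) ha.1) hb.1, ?_⟩
    show a.2 + b.2 = 0
    rw [ha.2, hb.2, add_zero]
  · refine ⟨min (j' + k) q, by omega, by omega, by omega, ?_⟩
    unfold Bset
    rw [if_neg (by omega)]
    left
    show a.2 + b.2 ∈ V (min (j' + k) (q : ℤ)).toNat
    have hVc := (hVgrp (min (j' + k) (q : ℤ)).toNat (by omega)).2.1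
    exact hVc _ _ (Bset_snd hV0 hVmono hjq (by omega) ha) (Bset_snd hV0 hVmono hj'q (by omega) hb)

end helpers
/-- `d(x,y) = min{3^{j/n} : x − y ∈ B_j, −M ≤ j ≤ q}` for `x ≠ y`, and `d(x,x) = 0`. -/
noncomputable def dX {Xq : Type*} [AddCommGroup Xq] (q M k : ℕ) (n : ℝ)
    (W : ℕ → Set Xq) (V : ℕ → Set (Fin q → ZMod 3)) (E : ℕ → Set Xq)
    (x y : Xq × (Fin q → ZMod 3)) : ℝ :=
  if x = y then 0
  else sInf {t : ℝ | ∃ j : ℤ, -(M : ℤ) ≤ j ∧ j ≤ q ∧ x - y ∈ Bset q k W V E j ∧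
    t = (3 : ℝ) ^ ((j : ℝ) / n)}

/-- Under the stated hypotheses on the flags `W`, `V`, the symmetric sets `E_ℓ`, and the
numerical condition on `n`, the function `d` is a translation-invariant metric on
`X = X_q × F₃^q`. -/
theorem stmt17 {Xq : Type*} [AddCommGroup Xq] (q M k : ℕ) (hq : 1 ≤ q) (hM : 1 ≤ M)
    (hk : 1 ≤ k) (n : ℝ) (hn : 0 < n)
    (W : ℕ → Set Xq) (V : ℕ → Set (Fin q → ZMod 3)) (E : ℕ → Set Xq)
    (hW0 : W 0 = Set.univ) (hWM : W M = {0})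
    (hWgrp : ∀ i ≤ M, (0 : Xq) ∈ W i ∧ (∀ a b : Xq, a ∈ W i → b ∈ W i → a + b ∈ W i) ∧
      (∀ a : Xq, a ∈ W i → -a ∈ W i))
    (hWnest : ∀ i, W (i + 1) ⊆ W i)
    (hV0 : V 0 = {0}) (hVq : V q = Set.univ)
    (hVgrp : ∀ j ≤ q, (0 : Fin q → ZMod 3) ∈ V j ∧
      (∀ a b, a ∈ V j → b ∈ V j → a + b ∈ V j) ∧ (∀ a, a ∈ V j → -a ∈ V j))
    (hVnest : ∀ j, V j ⊆ V (j + 1))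
    (hE : ∀ ℓ (a : Xq), a ∈ E ℓ → -a ∈ E ℓ)
    (hnum : ∀ j j' j'' : ℤ, -(M : ℤ) < j → -(M : ℤ) < j' → -(M : ℤ) < j'' →
      j ≤ q → j' ≤ q → j'' ≤ q →
      (3 : ℝ) ^ ((j : ℝ) / n) + (3 : ℝ) ^ ((j' : ℝ) / n) < (3 : ℝ) ^ ((j'' : ℝ) / n) →
      max j j' + k < j'') :
    (∀ x y : Xq × (Fin q → ZMod 3), dX q M k n W V E x y = 0 ↔ x = y) ∧
    (∀ x y, dX q M k n W V E x y = dX q M k n W V E y x) ∧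
    (∀ x y z, dX q M k n W V E x z ≤ dX q M k n W V E x y + dX q M k n W V E y z) ∧
    (∀ x y z, dX q M k n W V E (x + z) (y + z) = dX q M k n W V E x y) := by
  have hWanti : Antitone W := antitone_nat_of_succ_le hWnest
  have hVmono : Monotone V := monotone_nat_of_le_succ hVnest
  set S : Xq × (Fin q → ZMod 3) → Xq × (Fin q → ZMod 3) → Set ℝ := fun x y =>
    {t : ℝ | ∃ j : ℤ, -(M : ℤ) ≤ j ∧ j ≤ q ∧ x - y ∈ Bset q k W V E j ∧
      t = (3 : ℝ) ^ ((j : ℝ) / n)} with hS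
  have hdX : ∀ x y, dX q M k n W V E x y = if x = y then 0 else sInf (S x y) := by
    intro x y; rfl
  have hSfin : ∀ x y, (S x y).Finite := by
    intro x y
    apply Set.Finite.subset ((Set.finite_Icc (-(M : ℤ)) (q : ℤ)).image
      (fun j : ℤ => (3 : ℝ) ^ ((j : ℝ) / n)))
    rintro t ⟨j, h1, h2, _, rfl⟩
    exact ⟨j, Set.mem_Icc.2 ⟨h1, h2⟩, rfl⟩
  have hSne : ∀ x y, (S x y).Nonempty := by
    intro x y
    exact ⟨_, (q : ℤ), by omega, le_refl _, mem_Bset_top hq hVq _, rfl⟩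
  have hSpos : ∀ x y t, t ∈ S x y → 0 < t := by
    rintro x y t ⟨j, _, _, _, rfl⟩
    exact Real.rpow_pos_of_pos (by norm_num) _
  have hSbdd : ∀ x y, BddBelow (S x y) := fun x y => (hSfin x y).bddBelow
  -- witnesses : for x ≠ y, a minimizing j with strict lower bound -M
  have hwit : ∀ x y, x ≠ y → ∃ j : ℤ, -(M : ℤ) < j ∧ j ≤ q ∧
      x - y ∈ Bset q k W V E j ∧ dX q M k n W V E x y = (3 : ℝ) ^ ((j : ℝ) / n) := by
    intro x y hxy
    have hmem := (hSne x y).csInf_mem (hSfin x y)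
    obtain ⟨j, h1, h2, h3, h4⟩ := hmem
    refine ⟨j, ?_, h2, h3, by rw [hdX, if_neg hxy, h4]⟩
    rcases lt_or_eq_of_le h1 with h | h
    · exact h
    · exfalso
      rw [← h] at h3
      unfold Bset at h3
      rw [if_pos (by omega)] at h3
      have : x - y = 0 := by
        have h1' : (x - y).1 = 0 := by
          have := h3.1
          simp only [neg_neg, Int.toNat_natCast] at this
          rw [hWM] at this
          exact this
        exact Prod.ext h1' h3.2
      exact hxy (sub_eq_zero.1 this)
  have hnonneg : ∀ x y, 0 ≤ dX q M k n W V E x y := by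
    intro x y
    rw [hdX]
    split_ifs with h
    · exact le_refl 0
    · exact le_csInf (hSne x y) (fun t ht => (hSpos x y t ht).le)
  refine ⟨?_, ?_, ?_, ?_⟩
  · -- d = 0 ↔ x = y
    intro x y
    constructor
    · intro h0
      by_contra hxy
      obtain ⟨j, _, _, _, hval⟩ := hwit x y hxy
      have := Real.rpow_pos_of_pos (show (0:ℝ) < 3 by norm_num) ((j : ℝ) / n)
      rw [← hval, h0] at this
      exact lt_irrefl _ this
    · intro h; rw [hdX, if_pos h]
  · -- symmetry
    intro x y
    rcases eq_or_ne x y with h | h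
    · rw [h]
    · rw [hdX, hdX, if_neg h, if_neg (Ne.symm h)]
      congr 1
      ext t
      constructor
      · rintro ⟨j, h1, h2, h3, rfl⟩
        refine ⟨j, h1, h2, ?_, rfl⟩
        rw [show y - x = -(x - y) by abel]
        exact Bset_neg hWgrp hVgrp hE h1 h2 h3
      · rintro ⟨j, h1, h2, h3, rfl⟩
        refine ⟨j, h1, h2, ?_, rfl⟩
        rw [show x - y = -(y - x) by abel]
        exact Bset_neg hWgrp hVgrp hE h1 h2 h3
  · -- triangle
    intro x y z
    rcases eq_or_ne x y with hxy | hxy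
    · rw [hxy, hdX y y, if_pos rfl, zero_add]
    rcases eq_or_ne y z with hyz | hyz
    · rw [hyz, hdX z z, if_pos rfl, add_zero]
    rcases eq_or_ne x z with hxz | hxz
    · rw [hdX x z, if_pos hxz]
      exact add_nonneg (hnonneg x y) (hnonneg y z)
    obtain ⟨j, hj1, hj2, hj3, hj4⟩ := hwit x y hxy
    obtain ⟨j', hj'1, hj'2, hj'3, hj'4⟩ := hwit y z hyz
    obtain ⟨j'', h1, h2, h3, h4⟩ := Bset_add hq hWgrp hWanti hV0 hVmono hVgrp
      hj1 hj2 hj'1 hj'2 hj3 hj'3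
    rw [show (x - y) + (y - z) = x - z by abel] at h4
    have hle : (3 : ℝ) ^ ((j'' : ℝ) / n) ≤
        (3 : ℝ) ^ ((j : ℝ) / n) + (3 : ℝ) ^ ((j' : ℝ) / n) := by
      by_contra hlt
      push_neg at hlt
      have := hnum j j' j'' hj1 hj'1 h1 hj2 hj'2 h2 hlt
      omega
    have hdxz : dX q M k n W V E x z ≤ (3 : ℝ) ^ ((j'' : ℝ) / n) := by
      rw [hdX, if_neg hxz]
      exact csInf_le (hSbdd x z) ⟨j'', by omega, h2, h4, rfl⟩
    rw [hj4, hj'4]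
    exact hdxz.trans hle
  · -- translation invariance
    intro x y z
    have h2 : x + z - (y + z) = x - y := by abel
    have hSeq : S (x + z) (y + z) = S x y := by
      simp only [hS, h2]
    rcases eq_or_ne x y with h | h
    · rw [hdX, hdX, if_pos h, if_pos (by rw [h])]
    · rw [hdX, hdX, if_neg h, if_neg (fun hc => h (add_right_cancel hc)), hSeq]
end

section
/- Let E_1,…,E_q be the level sets of a quadratic form on X_q = F_q^m (q = 3^k) satisfying q^{m}/(2q) < |E_ℓ| < 2q^m/q for each ℓ, and let V_j ⊆ F_3^q be subspaces with |V_j| = 3^j. Define B_j = (X_q × V_j) ∪ ⋃_{ℓ=1}^{min{j+k,q}} (E_ℓ × V_ℓ) for 1 ≤ j ≤ q. Then 3^j ≤ |B_j|/|X_q| ≤ 4·3^j. -/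
open Finset

/-!
The set `X_q × V_j` already has `|X_q|·3^j` elements, and the remaining pieces add at most
`∑_{ℓ ≤ j+k} |E_ℓ|·|V_ℓ| ≤ (2/q)|X_q| ∑_{ℓ ≤ j+k} 3^ℓ ≤ (2/q)|X_q|·(3/2)·3^{j+k} = 3|X_q|·3^j`,
since `3^k = q`.
-/

theorem sum_Icc_one_three_pow_le (n : ℕ) :
    ∑ ℓ ∈ Icc 1 n, (3 : ℝ) ^ ℓ ≤ 3 / 2 * 3 ^ n := by
  induction n with
  | zero => norm_num
  | succ n ih =>
    rw [sum_Icc_succ_top (by omega), pow_succ]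
    linarith

theorem sum_Icc_one_le_of_le_mul_three_pow {a : ℕ → ℝ} {c : ℝ} (hc : 0 ≤ c) (n : ℕ)
    (ha : ∀ ℓ ∈ Icc 1 n, a ℓ ≤ c * 3 ^ ℓ) :
    ∑ ℓ ∈ Icc 1 n, a ℓ ≤ c * (3 / 2 * 3 ^ n) :=
  calc _ ≤ ∑ ℓ ∈ Icc 1 n, c * (3 : ℝ) ^ ℓ := sum_le_sum ha
    _ = c * ∑ ℓ ∈ Icc 1 n, (3 : ℝ) ^ ℓ := (mul_sum ..).symm
    _ ≤ c * (3 / 2 * 3 ^ n) := by gcongr; exact sum_Icc_one_three_pow_le n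

section ProductUnion

variable {ι α β : Type*} [Fintype α] [DecidableEq α] [DecidableEq β]

theorem card_univ_mul_card_le_card_union_biUnion (W : Finset β) (I : Finset ι)
    (E : ι → Finset α) (V : ι → Finset β) :
    Fintype.card α * #W ≤ #((univ ×ˢ W) ∪ I.biUnion fun ℓ => E ℓ ×ˢ V ℓ) := by
  rw [← card_univ, ← card_product]
  exact card_le_card subset_union_left

theorem card_union_biUnion_le (W : Finset β) (I : Finset ι)
    (E : ι → Finset α) (V : ι → Finset β) :
    #((univ ×ˢ W) ∪ I.biUnion fun ℓ => E ℓ ×ˢ V ℓ) ≤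
      Fintype.card α * #W + ∑ ℓ ∈ I, #(E ℓ) * #(V ℓ) := by
  calc _ ≤ #(univ ×ˢ W) + #(I.biUnion fun ℓ => E ℓ ×ˢ V ℓ) := card_union_le _ _
    _ ≤ #(univ ×ˢ W) + ∑ ℓ ∈ I, #(E ℓ ×ˢ V ℓ) := Nat.add_le_add_left card_biUnion_le _
    _ = _ := by simp only [card_product, card_univ]

end ProductUnion

theorem stmt18_general (F : Type*) [Fintype F] [DecidableEq F]
    (k m q : ℕ) (hq : q = 3 ^ k)
    (hcard : Fintype.card F = q)
    (E : ℕ → Finset (Fin m → F))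
    (hEcard : ∀ ℓ, 1 ≤ ℓ → ℓ ≤ q →
      (q : ℝ) ^ m / (2 * q) < ((E ℓ).card : ℝ) ∧ ((E ℓ).card : ℝ) < 2 * (q : ℝ) ^ m / q)
    (V : ℕ → Finset (Fin q → ZMod 3)) (hV : ∀ j ≤ q, (V j).card = 3 ^ j)
    (j : ℕ) (hjq : j ≤ q) :
    (3 : ℝ) ^ j ≤
        ((((univ ×ˢ V j) ∪
            (Finset.Icc 1 (min (j + k) q)).biUnion (fun ℓ => E ℓ ×ˢ V ℓ)).card : ℝ) /
          (Fintype.card (Fin m → F) : ℝ)) ∧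
      ((((univ ×ˢ V j) ∪
            (Finset.Icc 1 (min (j + k) q)).biUnion (fun ℓ => E ℓ ×ˢ V ℓ)).card : ℝ) /
          (Fintype.card (Fin m → F) : ℝ)) ≤ 4 * (3 : ℝ) ^ j := by
  set M := min (j + k) q
  set N : ℝ := (Fintype.card (Fin m → F) : ℝ)
  have hqpos : (0 : ℝ) < q := by rw [hq]; positivity
  have hN : N = (q : ℝ) ^ m := by simp [N, hcard]
  have hNpos : 0 < N := by rw [hN]; positivity
  have hpiece : ∀ ℓ ∈ Icc 1 M, ((#(E ℓ) * #(V ℓ) : ℕ) : ℝ) ≤ 2 * N / q * 3 ^ ℓ := by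
    intro ℓ hℓ
    obtain ⟨hℓ1, hℓM⟩ := mem_Icc.mp hℓ
    have hℓq : ℓ ≤ q := hℓM.trans (min_le_right _ _)
    rw [Nat.cast_mul, hV ℓ hℓq, hN]
    push_cast
    gcongr
    exact (hEcard ℓ hℓ1 hℓq).2.le
  have hpieces : ∑ ℓ ∈ Icc 1 M, ((#(E ℓ) * #(V ℓ) : ℕ) : ℝ) ≤ 3 * N * 3 ^ j :=
    calc _ ≤ 2 * N / q * (3 / 2 * 3 ^ M) :=
          sum_Icc_one_le_of_le_mul_three_pow (by positivity) M hpiece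
      _ ≤ 2 * N / q * (3 / 2 * 3 ^ (j + k)) := by gcongr; norm_num; exact min_le_left _ _
      _ = 3 * N * 3 ^ j := by
          rw [pow_add, show (3 : ℝ) ^ k = q by exact_mod_cast hq.symm]
          field_simp
  have hVj : ((#(V j) : ℕ) : ℝ) = 3 ^ j := by exact_mod_cast hV j hjq
  constructor
  · rw [le_div_iff₀ hNpos, mul_comm, ← hVj]
    simp only [N]
    exact_mod_cast card_univ_mul_card_le_card_union_biUnion (V j) (Icc 1 M) E V
  · rw [div_le_iff₀ hNpos]
    calc _ ≤ N * #(V j) + ∑ ℓ ∈ Icc 1 M, ((#(E ℓ) * #(V ℓ) : ℕ) : ℝ) := by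
          simp only [N]
          exact_mod_cast card_union_biUnion_le (V j) (Icc 1 M) E V
      _ ≤ N * 3 ^ j + 3 * N * 3 ^ j := by rw [hVj]; gcongr
      _ = 4 * 3 ^ j * N := by ring

/-- Cardinality bounds for the sets
`B_j = (X_q × V_j) ∪ ⋃_{ℓ=1}^{min(j+k,q)} (E_ℓ × V_ℓ)`, where the `E_ℓ` are level sets
of the sum-of-squares quadratic form on `X_q = F_q^m` (with `q = 3^k`) of cardinality
strictly between `q^m/(2q)` and `2q^m/q`, and `|V_j| = 3^j`:
one has `3^j ≤ |B_j|/|X_q| ≤ 4·3^j`. -/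
theorem stmt18 (F : Type*) [Field F] [Fintype F] [DecidableEq F]
    (k m q : ℕ) (hk : 1 ≤ k) (hm : 1 ≤ m) (hq : q = 3 ^ k)
    (hcard : Fintype.card F = q)
    (zs : ℕ → F) (E : ℕ → Finset (Fin m → F))
    (hE : ∀ ℓ, E ℓ = univ.filter (fun x : Fin m → F => ∑ i, x i ^ 2 = zs ℓ))
    (hEcard : ∀ ℓ, 1 ≤ ℓ → ℓ ≤ q →
      (q : ℝ) ^ m / (2 * q) < ((E ℓ).card : ℝ) ∧ ((E ℓ).card : ℝ) < 2 * (q : ℝ) ^ m / q)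
    (V : ℕ → Finset (Fin q → ZMod 3)) (hV : ∀ j ≤ q, (V j).card = 3 ^ j)
    (hVnest : ∀ j, V j ⊆ V (j + 1))
    (j : ℕ) (hj1 : 1 ≤ j) (hjq : j ≤ q) :
    (3 : ℝ) ^ j ≤
        ((((univ ×ˢ V j) ∪
            (Finset.Icc 1 (min (j + k) q)).biUnion (fun ℓ => E ℓ ×ˢ V ℓ)).card : ℝ) /
          (Fintype.card (Fin m → F) : ℝ)) ∧
      ((((univ ×ˢ V j) ∪
            (Finset.Icc 1 (min (j + k) q)).biUnion (fun ℓ => E ℓ ×ˢ V ℓ)).card : ℝ) /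
          (Fintype.card (Fin m → F) : ℝ)) ≤ 4 * (3 : ℝ) ^ j :=
  stmt18_general F k m q hq hcard E hEcard V hV j hjq
end
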